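/- If a binary cubic form g over K with nonzero discriminant Δ admits an automorphism M ∈ GL(2,K) of order 3 (g^M = g, M³ = I, M ≠ I), then det(M) = 1 and Δ is a square in K. -/
import Mathlib


/-- Discriminant of the binary cubic `aX³+bX²Y+cXY²+dY³`. -/
def cubicDisc {K : Type*} [CommRing K] (a b c d : K) : K :=
  b^2*c^2 - 4*a*c^3 - 4*b^3*d - 27*a^2*d^2 + 18*a*b*c*d

/-- Coefficient of `X³` in `g(rX+tY, sX+uY)`. -/
def tA {K : Type*} [CommRing K] (a b c d r s t u : K) : K :=
  a*r^3 + b*r^2*s + c*r*s^2 + d*s^3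

/-- Coefficient of `X²Y` in `g(rX+tY, sX+uY)`. -/
def tB {K : Type*} [CommRing K] (a b c d r s t u : K) : K :=
  3*a*r^2*t + b*(r^2*u + 2*r*s*t) + c*(2*r*s*u + s^2*t) + 3*d*s^2*u

/-- Coefficient of `XY²` in `g(rX+tY, sX+uY)`. -/
def tC {K : Type*} [CommRing K] (a b c d r s t u : K) : K :=
  3*a*r*t^2 + b*(2*r*t*u + s*t^2) + c*(r*u^2 + 2*s*t*u) + 3*d*s*u^2

/-- Coefficient of `Y³` in `g(rX+tY, sX+uY)`. -/
def tD {K : Type*} [CommRing K] (a b c d r s t u : K) : K :=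
  a*t^3 + b*t^2*u + c*t*u^2 + d*u^3

/-- From the order-3 fixed-quadratic (Hessian) data, `Δ` is a square. -/
lemma key_sq {K : Type*} [Field K] (h2 : (2:K) ≠ 0) (h3 : (3:K) ≠ 0)
    (P Q R r s t u Δ : K)
    (hX : P*r^2 + Q*r*s + R*s^2 = P)
    (hY : 2*P*r*t + Q*(r*u + s*t) + 2*R*s*u = Q)
    (hZ : P*t^2 + Q*t*u + R*u^2 = R)
    (hu : r + u = -1) (hd : r*u - s*t = 1)
    (hI4 : Q^2 - 4*P*R = -3*Δ) : ∃ e : K, Δ = e^2 := by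
  have z1 : P*(u - r) - Q*s = 0 := by
    have hzd : 2*(P*(u - r) - Q*s) = 0 := by
      linear_combination (-2*u)*hX + s*hY + (-2*P - 2*P*s*t + 2*P*r*u)*hu
        + (Q*s - 2*P - 2*P*u)*hd
    exact (mul_eq_zero.mp hzd).resolve_left h2
  have z2 : P*t + R*s = 0 := by
    have hzd : 2*(P*t + R*s) = 0 := by
      linear_combination (-2*t)*hX + r*hY + (Q + Q*s*t - Q*r*u)*hu
        + (-2*R*s + Q + Q*u)*hd
    exact (mul_eq_zero.mp hzd).resolve_left h2
  have z3 : Q*t + R*(u - r) = 0 := by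
    linear_combination (-t^2)*hX + (r*t)*hY + (-1 - r^2)*hZ
      + (R*u - R*r + Q*t)*hu + (R - R*s*t + R*r*u)*hd
  by_cases hs : s = 0
  · by_cases ht : t = 0
    · have hur : u - r ≠ 0 := by
        intro h
        exact h3 (by linear_combination (-4)*hd + (r + u - 1)*hu + (-(u - r))*h + (-4*t)*hs)
      have hP0 : P = 0 := by
        have hP1 : P*(u - r) = 0 := by linear_combination z1 + Q*hs
        exact (mul_eq_zero.mp hP1).resolve_right hur
      refine ⟨Q/(u - r), ?_⟩
      rw [div_pow, eq_div_iff (pow_ne_zero 2 hur)]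
      linear_combination (Δ*(r + u - 1))*hu - 4*Δ*hd - 4*Δ*t*hs - hI4 - 4*R*hP0
    · refine ⟨R/t, ?_⟩
      rw [div_pow, eq_div_iff (pow_ne_zero 2 ht)]
      have h33 : 3*(Δ*t^2) = 3*R^2 := by
        linear_combination t^2*hI4 - (R^2*(r + u - 1))*hu + 4*R^2*hd
          + (-(Q*t + R*(u - r)) - 2*R*(r - u))*z3 + 4*R*t*z2
      exact mul_left_cancel₀ h3 h33
  · refine ⟨P/s, ?_⟩
    rw [div_pow, eq_div_iff (pow_ne_zero 2 hs)]
    have h33 : 3*(Δ*s^2) = 3*P^2 := by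
      linear_combination s^2*hI4 - (P^2*(u + r - 1))*hu + 4*P^2*hd
        + (P*(u - r) + Q*s)*z1 + 4*P*s*z2
    exact mul_left_cancel₀ h3 h33

/-- Covariance of the Hessian: the transformed Hessian coefficients agree with
the Hessian of the original form, given the fixed-form equations. -/
lemma hessian_fixed {K : Type*} [Field K] (a b c d r s t u : K)
    (hδ : r*u - s*t ≠ 0)
    (hA : tA a b c d r s t u = (r*u - s*t)*a)
    (hB : tB a b c d r s t u = (r*u - s*t)*b)
    (hC : tC a b c d r s t u = (r*u - s*t)*c)
    (hD : tD a b c d r s t u = (r*u - s*t)*d) :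
    (3*a*c - b^2)*r^2 + (9*a*d - b*c)*r*s + (3*b*d - c^2)*s^2 = 3*a*c - b^2 ∧
    2*(3*a*c - b^2)*r*t + (9*a*d - b*c)*(r*u + s*t) + 2*(3*b*d - c^2)*s*u = 9*a*d - b*c ∧
    (3*a*c - b^2)*t^2 + (9*a*d - b*c)*t*u + (3*b*d - c^2)*u^2 = 3*b*d - c^2 := by
  simp only [tA, tB, tC, tD] at hA hB hC hD
  have hsq := pow_ne_zero 2 hδ
  refine ⟨?_, ?_, ?_⟩
  · have h0 : (r*u - s*t)^2 * (((3*a*c - b^2)*r^2 + (9*a*d - b*c)*r*s + (3*b*d - c^2)*s^2)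
        - (3*a*c - b^2)) = 0 := by
      linear_combination
        (3*(3*a*r*t^2 + b*(2*r*t*u + s*t^2) + c*(r*u^2 + 2*s*t*u) + 3*d*s*u^2))*hA
        + (3*(r*u - s*t)*a)*hC
        - ((3*a*r^2*t + b*(r^2*u + 2*r*s*t) + c*(2*r*s*u + s^2*t) + 3*d*s^2*u)
            + (r*u - s*t)*b)*hB
    exact sub_eq_zero.mp ((mul_eq_zero.mp h0).resolve_left hsq)
  · have h0 : (r*u - s*t)^2 * ((2*(3*a*c - b^2)*r*t + (9*a*d - b*c)*(r*u + s*t)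
        + 2*(3*b*d - c^2)*s*u) - (9*a*d - b*c)) = 0 := by
      linear_combination
        (9*(a*t^3 + b*t^2*u + c*t*u^2 + d*u^3))*hA
        + (9*(r*u - s*t)*a)*hD
        - (3*a*r*t^2 + b*(2*r*t*u + s*t^2) + c*(r*u^2 + 2*s*t*u) + 3*d*s*u^2)*hB
        - ((r*u - s*t)*b)*hC
    exact sub_eq_zero.mp ((mul_eq_zero.mp h0).resolve_left hsq)
  · have h0 : (r*u - s*t)^2 * (((3*a*c - b^2)*t^2 + (9*a*d - b*c)*t*u + (3*b*d - c^2)*u^2)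
        - (3*b*d - c^2)) = 0 := by
      linear_combination
        (3*(a*t^3 + b*t^2*u + c*t*u^2 + d*u^3))*hB
        + (3*(r*u - s*t)*b)*hD
        - ((3*a*r*t^2 + b*(2*r*t*u + s*t^2) + c*(r*u^2 + 2*s*t*u) + 3*d*s*u^2)
            + (r*u - s*t)*c)*hC
    exact sub_eq_zero.mp ((mul_eq_zero.mp h0).resolve_left hsq)

/-- If a binary cubic `g` with nonzero discriminant `Δ` admits an automorphism
`M ∈ GL(2,K)` of order 3 (under the twisted action, expressed by clearing the
determinant), then `det(M) = 1` and `Δ` is a square in `K`. -/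
theorem cubic_order_three_automorphism {K : Type*} [Field K]
    (h2 : (2:K) ≠ 0) (h3 : (3:K) ≠ 0)
    (a b c d : K) (hΔ : cubicDisc a b c d ≠ 0)
    (M : Matrix (Fin 2) (Fin 2) K) (hdet : M.det ≠ 0)
    (hM3 : M^3 = 1) (hM1 : M ≠ 1)
    (hfix : tA a b c d (M 0 0) (M 0 1) (M 1 0) (M 1 1) = M.det * a ∧
            tB a b c d (M 0 0) (M 0 1) (M 1 0) (M 1 1) = M.det * b ∧
            tC a b c d (M 0 0) (M 0 1) (M 1 0) (M 1 1) = M.det * c ∧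
            tD a b c d (M 0 0) (M 0 1) (M 1 0) (M 1 1) = M.det * d) :
    M.det = 1 ∧ ∃ e : K, cubicDisc a b c d = e^2 := by
  obtain ⟨hA, hB, hC, hD⟩ := hfix
  have hdet2 : M.det = M 0 0 * M 1 1 - M 0 1 * M 1 0 := Matrix.det_fin_two M
  set r := M 0 0 with hrdef
  set s := M 0 1 with hsdef
  set t := M 1 0 with htdef
  set u := M 1 1 with hudef
  rw [hdet2] at hA hB hC hD
  have hδ : r*u - s*t ≠ 0 := by rw [hdet2] at hdet; exact hdet
  obtain ⟨hX, hY, hZ⟩ := hessian_fixed a b c d r s t u hδ hA hB hC hD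
  -- (det)^2 = 1
  have hsq : (r*u - s*t)^2 = 1 := by
    by_contra hne
    apply hΔ
    have h30 : ((9*a*d - b*c)^2 - 4*(3*a*c - b^2)*(3*b*d - c^2)) * ((r*u - s*t)^2 - 1) = 0 := by
      linear_combination
        ((2*(3*a*c - b^2)*r*t + (9*a*d - b*c)*(r*u + s*t) + 2*(3*b*d - c^2)*s*u)
          + (9*a*d - b*c))*hY
        - 4*((3*a*c - b^2)*r^2 + (9*a*d - b*c)*r*s + (3*b*d - c^2)*s^2)*hZ
        - 4*(3*b*d - c^2)*hX
    have h31 : (3 * cubicDisc a b c d) * ((r*u - s*t)^2 - 1) = 0 := by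
      simp only [cubicDisc]
      linear_combination (-1 : K) * h30
    rcases mul_eq_zero.mp h31 with h | h
    · rcases mul_eq_zero.mp h with h' | h'
      · exact absurd h' h3
      · exact h'
    · exact absurd (by linear_combination h : (r*u - s*t)^2 = 1) hne
  -- det = 1
  have hδ3 : M.det ^ 3 = 1 := by
    rw [← Matrix.det_pow, hM3, Matrix.det_one]
  have hδ1 : M.det = 1 := by
    rw [hdet2]
    rw [hdet2, pow_succ] at hδ3
    rw [show (M 0 0 * M 1 1 - M 0 1 * M 1 0) ^ 2 = (r*u - s*t)^2 from by ring, hsq, one_mul] at hδ3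
    rw [show M 0 0 * M 1 1 - M 0 1 * M 1 0 = r*u - s*t from by ring] at hδ3 ⊢
    exact hδ3
  have hd1 : r*u - s*t = 1 := by rw [← hdet2]; exact hδ1
  refine ⟨hδ1, ?_⟩
  -- entry equations of M^3 = 1
  have h9 : M * M * M = 1 := by
    rw [← hM3, pow_succ, pow_succ, pow_one]
  have E00 : r^3 + 2*r*s*t + s*t*u = 1 := by
    have h := congrFun (congrFun h9 0) 0
    simp [Matrix.mul_apply, Fin.sum_univ_two, Matrix.one_apply] at h
    linear_combination h
  have E01 : s*(r^2 + r*u + u^2 + s*t) = 0 := by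
    have h := congrFun (congrFun h9 0) 1
    simp [Matrix.mul_apply, Fin.sum_univ_two, Matrix.one_apply] at h
    linear_combination h
  have E10 : t*(r^2 + r*u + u^2 + s*t) = 0 := by
    have h := congrFun (congrFun h9 1) 0
    simp [Matrix.mul_apply, Fin.sum_univ_two, Matrix.one_apply] at h
    linear_combination h
  have E11 : u^3 + 2*s*t*u + r*s*t = 1 := by
    have h := congrFun (congrFun h9 1) 1
    simp [Matrix.mul_apply, Fin.sum_univ_two, Matrix.one_apply] at h
    linear_combination h
  -- trace = -1
  have htr : r + u = -1 := by
    by_cases hk : r^2 + r*u + u^2 + s*t = 0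
    · -- (r+u)^2 = 1
      have hτ2 : (r + u)^2 = 1 := by linear_combination hk + hd1
      by_cases hτ : r + u = -1
      · exact hτ
      · exfalso
        have hτ1 : r + u = 1 := by
          have hfac : (r + u - 1)*(r + u + 1) = 0 := by linear_combination hτ2
          have h' := (mul_eq_zero.mp hfac).resolve_right
            (by intro h'; exact hτ (by linear_combination h'))
          linear_combination h'
        exact h2 (by linear_combination (-1)*E00 + (1 + 2*s*t + r - r*u + r^2)*hτ1
          + (u - 2)*hd1)
    · -- M is scalar, hence M = 1, contradiction
      exfalso
      have hs0 : s = 0 := (mul_eq_zero.mp E01).resolve_right hk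
      have ht0 : t = 0 := (mul_eq_zero.mp E10).resolve_right hk
      have hru : (r - u)*(r^2 + r*u + u^2 + s*t) = 0 := by linear_combination E00 - E11
      have hru' : u = r := by
        have h' := (mul_eq_zero.mp hru).resolve_right hk
        linear_combination (-1)*h'
      have hr1 : r = 1 := by
        linear_combination E00 - r*hd1 - r^2*(by linear_combination (-1)*hru' : r - u = 0)
          - (3*r*t + t*u)*hs0
      have hu1 : u = 1 := by rw [hru', hr1]
      apply hM1
      ext i j
      fin_cases i <;> fin_cases j <;>
        simp [Matrix.one_apply] <;>
        first
          | exact hr1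
          | exact hs0
          | exact ht0
          | exact hu1
    -- apply the square lemma
  exact key_sq h2 h3 (3*a*c - b^2) (9*a*d - b*c) (3*b*d - c^2) r s t u
    (cubicDisc a b c d) hX hY hZ htr hd1
    (by simp only [cubicDisc]; ring)
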